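/- arXiv:cs/0504090 — 2 statements merged into one kernel-verified Lean document; each statement's English description precedes it below -/
import Mathlib

section
/- If a partial matching on a finite ranked poset is acyclic, then there exists a linear extension in which each matched element u(a) directly follows a, and moreover this linear extension can be chosen so that its restriction to the set D ∪ C of down-matched and critical elements is non-decreasing in rank. -/
/-!
Group the elements into blocks `{a, u a}` (for `a ∈ D`) and `{c}` (for `c ∈ C`), each
represented by its bottom. Order the blocks by the rank of the bottom, breaking ties by the
relation "`b ⋖ u a`, so `b` must come before `a`": acyclicity makes its transitive closure
irreflexive, so the number of elements forced below a bottom strictly increases along it.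
Listing the blocks in this order, each one internally by rank, gives the extension. A cover
`x ⋖ y` between different blocks raises the bottom rank unless `y = u a` and `x` is a bottom of
the same rank as `a`, which is exactly the tie-breaking case; and on `D ∪ C` every element is
its own bottom, so there the order follows the rank.
-/

/-- A partial matching in the covering graph of a poset: a set of pairs `(a, b)` with
`b` covering `a`, all members of all pairs pairwise distinct. -/
def PosetMatching {α : Type} [PartialOrder α] (M : Finset (α × α)) : Prop :=
  (∀ p ∈ M, p.1 ⋖ p.2) ∧
  ∀ p ∈ M, ∀ q ∈ M, p ≠ q → p.1 ≠ q.1 ∧ p.1 ≠ q.2 ∧ p.2 ≠ q.1 ∧ p.2 ≠ q.2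

/-- An alternating cycle `d(b₁) ≺ b₁ ≻ d(b₂) ≺ b₂ ≻ ⋯ ≻ d(bₙ) ≺ bₙ ≻ d(b₁)` with
`n ≥ 2` and distinct matched pairs `(d(bᵢ), bᵢ) ∈ M` (the pair `f i` is `(d(bᵢ), bᵢ)`,
and `bᵢ ≻ d(bᵢ₊₁)` cyclically). -/
def PosetHasAltCycle {α : Type} [PartialOrder α] (M : Finset (α × α)) : Prop :=
  ∃ n : ℕ, ∃ f : Fin (n + 2) → α × α, Function.Injective f ∧
    (∀ i, f i ∈ M) ∧ ∀ i, (f (i + 1)).1 ⋖ (f i).2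

/-- `ι` is a linear extension of the finite partial order: an order-preserving
enumeration of its elements. -/
def IsLinearExtension {α : Type} [Fintype α] [PartialOrder α]
    (ι : α ≃ Fin (Fintype.card α)) : Prop :=
  ∀ x y : α, x ≤ y → ι x ≤ ι y

open Function Relation

section Cycles

variable {β : Type*} {R : β → β → Prop}

theorem Relation.TransGen.exists_walk {a b : β} (h : TransGen R a b) :
    ∃ (m : ℕ) (g : ℕ → β), 0 < m ∧ g 0 = a ∧ g m = b ∧ ∀ i < m, R (g i) (g (i + 1)) := by
  induction h with
  | @single b hab => exact ⟨1, fun i => if i = 0 then a else b, one_pos, rfl, rfl, by simpa⟩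
  | @tail b c _ hbc ih =>
    obtain ⟨m, g, hm, hg0, hgm, hg⟩ := ih
    refine ⟨m + 1, update g (m + 1) c, m.succ_pos, ?_, by simp, fun i hi => ?_⟩
    · simpa [update_of_ne (m.succ_ne_zero).symm] using hg0
    · rw [update_of_ne (by omega)]
      rcases Nat.lt_succ_iff_lt_or_eq.1 hi with hi | rfl
      · simpa [update_of_ne (show i + 1 ≠ m + 1 by omega)] using hg i hi
      · simpa [hgm] using hbc

/-- A shortest closed walk through `a` visits no vertex twice. -/
theorem exists_injective_cycle_of_transGen (hirr : ∀ x, ¬ R x x) {a : β}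
    (h : TransGen R a a) :
    ∃ (n : ℕ) (g : Fin (n + 2) → β), Injective g ∧ ∀ i, R (g i) (g (i + 1)) := by
  classical
  have hex : ∃ m, 0 < m ∧ ∃ g : ℕ → β, g m = g 0 ∧ ∀ i < m, R (g i) (g (i + 1)) := by
    obtain ⟨m, g, hm, hg0, hgm, hg⟩ := h.exists_walk
    exact ⟨m, hm, g, hgm.trans hg0.symm, hg⟩
  obtain ⟨hm, g, hgm, hg⟩ := Nat.find_spec hex
  have hinj : ∀ i j, i < j → j < Nat.find hex → g i ≠ g j := fun i j hij hj he =>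
    Nat.find_min hex (show j - i < Nat.find hex by omega)
      ⟨by omega, fun k => g (i + k), by simpa [Nat.add_sub_cancel' hij.le] using he.symm,
        fun k hk => by simpa [add_assoc] using hg (i + k) (by omega)⟩
  generalize Nat.find hex = m at hm hgm hg hinj
  obtain ⟨n, rfl⟩ : ∃ n, m = n + 2 := by
    refine ⟨m - 2, ?_⟩
    by_contra hm2
    obtain rfl : m = 1 := by omega
    exact hirr (g 0) (hgm ▸ hg 0 one_pos)
  refine ⟨n, fun i => g i, fun i j he => ?_, fun i => ?_⟩
  · rcases lt_trichotomy (i : ℕ) j with hij | hij | hij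
    · exact absurd he (hinj _ _ hij j.2)
    · exact Fin.ext hij
    · exact absurd he.symm (hinj _ _ hij i.2)
  · change R (g i) (g (i + 1 : Fin (n + 2)))
    rw [Fin.val_add_one]
    split_ifs with hi
    · simpa [hi, hgm] using hg (n + 1) (by omega)
    · exact hg i i.2

theorem ncard_transGen_lt_of_rel [Finite β] (hacyc : ∀ a, ¬ TransGen R a a) {a b : β}
    (hab : R a b) : {c | TransGen R b c}.ncard < {c | TransGen R a c}.ncard :=
  Set.ncard_lt_ncard <| Set.ssubset_iff_of_subset (fun _ hc => TransGen.head hab hc) |>.2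
    ⟨b, TransGen.single hab, hacyc b⟩

end Cycles

theorem exists_equiv_fin_of_injective {α β : Type*} [Fintype α] [LinearOrder β] {F : α → β}
    (hF : Injective F) :
    ∃ ι : α ≃ Fin (Fintype.card α),
      (∀ x y, ι x ≤ ι y ↔ F x ≤ F y) ∧ ∀ x y, F x ⋖ F y → (ι y : ℕ) = ι x + 1 := by
  let _ : LinearOrder α := LinearOrder.lift' F hF
  let ι := (Fintype.orderIsoFinOfCardEq α rfl).symm
  refine ⟨ι.toEquiv, fun x y => ι.le_iff_le, fun x y hxy => ?_⟩
  have hιxy : ι x ⋖ ι y := (apply_covBy_apply_iff ι).2 ⟨hxy.1, fun c => @hxy.2 (F c)⟩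
  exact (Nat.covBy_iff_add_one_eq.1 (Fin.covBy_iff.1 hιxy)).symm

section Matching

variable {α : Type} {M : Finset (α × α)}

open Classical in
/-- `d x` for `x ∈ U`, and `x` itself otherwise: the bottom of the block `{d x, x}` or
`{x}` of `x`. -/
noncomputable def matchBottom (M : Finset (α × α)) (x : α) : α :=
  if h : ∃ p ∈ M, p.2 = x then h.choose.1 else x

theorem matchBottom_eq_or_mem (M : Finset (α × α)) (x : α) :
    matchBottom M x = x ∨ (matchBottom M x, x) ∈ M := by
  unfold matchBottom
  split_ifs with h
  · obtain ⟨hpM, hpx⟩ := h.choose_spec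
    exact .inr (by convert hpM using 1; exact Prod.ext rfl hpx.symm)
  · exact .inl rfl

theorem matchBottom_of_forall_snd_ne {x : α} (hx : ∀ p ∈ M, p.2 ≠ x) :
    matchBottom M x = x :=
  dif_neg fun ⟨p, hp, hpx⟩ => hx p hp hpx

variable [PartialOrder α]

theorem PosetMatching.eq_of_fst_eq (hM : PosetMatching M) {p q : α × α} (hp : p ∈ M)
    (hq : q ∈ M) (h : p.1 = q.1) : p = q := by
  by_contra hpq
  exact (hM.2 p hp q hq hpq).1 h

theorem PosetMatching.eq_of_snd_eq (hM : PosetMatching M) {p q : α × α} (hp : p ∈ M)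
    (hq : q ∈ M) (h : p.2 = q.2) : p = q := by
  by_contra hpq
  exact (hM.2 p hp q hq hpq).2.2.2 h

theorem PosetMatching.fst_ne_snd (hM : PosetMatching M) {p q : α × α} (hp : p ∈ M)
    (hq : q ∈ M) : p.1 ≠ q.2 := by
  rcases eq_or_ne p q with rfl | hpq
  · exact (hM.1 p hp).lt.ne
  · exact (hM.2 p hp q hq hpq).2.1

theorem matchBottom_snd (hM : PosetMatching M) {p : α × α} (hp : p ∈ M) :
    matchBottom M p.2 = p.1 := by
  have h : ∃ q ∈ M, q.2 = p.2 := ⟨p, hp, rfl⟩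
  obtain ⟨hq, hqp⟩ := h.choose_spec
  rw [matchBottom, dif_pos h, hM.eq_of_snd_eq hq hp hqp]

theorem matchBottom_fst (hM : PosetMatching M) {p : α × α} (hp : p ∈ M) :
    matchBottom M p.1 = p.1 :=
  matchBottom_of_forall_snd_ne fun _ hq => (hM.fst_ne_snd hp hq).symm

theorem matchBottom_eq_self (hM : PosetMatching M) {x : α}
    (hx : (∃ p ∈ M, p.1 = x) ∨ ∀ p ∈ M, p.1 ≠ x ∧ p.2 ≠ x) : matchBottom M x = x := by
  rcases hx with ⟨p, hp, rfl⟩ | hx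
  · exact matchBottom_fst hM hp
  · exact matchBottom_of_forall_snd_ne fun p hp => (hx p hp).2

/-- `b ⋖ u a` forces `b` before `a`; a cycle of such steps is an alternating cycle. -/
def AltStep (M : Finset (α × α)) (a b : α) : Prop :=
  ∃ q ∈ M, q.1 = a ∧ b ⋖ q.2 ∧ a ≠ b

theorem not_transGen_altStep_self (hacyc : ¬ PosetHasAltCycle M) (a : α) :
    ¬ TransGen (AltStep M) a a := fun ha => by
  obtain ⟨n, g, hg, hstep⟩ :=
    exists_injective_cycle_of_transGen (fun x ⟨_, _, _, _, hx⟩ => hx rfl) ha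
  choose q hqM hq₁ hcov _ using hstep
  refine hacyc ⟨n, q, fun i j hij => hg ?_, hqM, fun i => ?_⟩
  · rw [← hq₁ i, ← hq₁ j, hij]
  · rw [hq₁]
    exact hcov i

end Matching

section Extension

variable {α : Type} [Fintype α] [PartialOrder α] {M : Finset (α × α)} {rk : α → ℕ}

/-- Blocks are ordered by the rank of their bottom, then by the number of elements that must
precede the bottom, then arbitrarily. -/
noncomputable def blockKey (M : Finset (α × α)) (rk : α → ℕ) (a : α) :
    ℕ ×ₗ ℕ ×ₗ Fin (Fintype.card α) :=
  toLex (rk a, toLex ({b | TransGen (AltStep M) a b}.ncard, Fintype.equivFin α a))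

noncomputable def extensionKey (M : Finset (α × α)) (rk : α → ℕ) (x : α) :
    (ℕ ×ₗ ℕ ×ₗ Fin (Fintype.card α)) ×ₗ ℕ :=
  toLex (blockKey M rk (matchBottom M x), rk x)

theorem blockKey_injective : Injective (blockKey M rk) := fun _ _ h =>
  (Fintype.equivFin α).injective (congrArg (fun k => (ofLex (ofLex k).2).2) h)

theorem blockKey_lt_of_altStep (hacyc : ¬ PosetHasAltCycle M) {a b : α} (hab : AltStep M a b)
    (hrk : rk a = rk b) : blockKey M rk b < blockKey M rk a :=
  Prod.Lex.toLex_lt_toLex.2 <| .inr ⟨hrk.symm, Prod.Lex.toLex_lt_toLex.2 <| .inl <|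
    ncard_transGen_lt_of_rel (not_transGen_altStep_self hacyc) hab⟩

theorem extensionKey_injective (hM : PosetMatching M)
    (hrk : ∀ a b : α, a ⋖ b → rk b = rk a + 1) : Injective (extensionKey M rk) := by
  intro x y h
  obtain ⟨hb, hr⟩ : matchBottom M x = matchBottom M y ∧ rk x = rk y := by
    simpa [extensionKey, blockKey_injective.eq_iff] using h
  rcases matchBottom_eq_or_mem M x with hx | hx <;> rcases matchBottom_eq_or_mem M y with hy | hy
  · rw [← hx, hb, hy]
  · have hry : rk y = rk (matchBottom M y) + 1 := hrk _ _ (hM.1 _ hy)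
    rw [← hb, hx] at hry
    omega
  · have hrx : rk x = rk (matchBottom M x) + 1 := hrk _ _ (hM.1 _ hx)
    rw [hb, hy] at hrx
    omega
  · exact congrArg Prod.snd (hM.eq_of_fst_eq hx hy hb)

theorem extensionKey_lt_of_covBy (hM : PosetMatching M)
    (hrk : ∀ a b : α, a ⋖ b → rk b = rk a + 1) (hacyc : ¬ PosetHasAltCycle M) {x y : α}
    (hxy : x ⋖ y) : extensionKey M rk x < extensionKey M rk y := by
  have hrxy := hrk x y hxy
  rw [extensionKey, extensionKey, Prod.Lex.toLex_lt_toLex]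
  rcases matchBottom_eq_or_mem M x with hx | hx <;> rcases matchBottom_eq_or_mem M y with hy | hy
  · rw [hx, hy]
    exact .inl (Prod.Lex.toLex_lt_toLex.2 (.inl (by omega)))
  · have hry : rk y = rk (matchBottom M y) + 1 := hrk _ _ (hM.1 _ hy)
    rw [hx]
    by_cases hxb : matchBottom M y = x
    · exact .inr ⟨by rw [hxb], by omega⟩
    · exact .inl (blockKey_lt_of_altStep hacyc ⟨_, hy, rfl, hxy, hxb⟩ (by omega))
  · have hrx : rk x = rk (matchBottom M x) + 1 := hrk _ _ (hM.1 _ hx)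
    rw [hy]
    exact .inl (Prod.Lex.toLex_lt_toLex.2 (.inl (by omega)))
  · have hrx : rk x = rk (matchBottom M x) + 1 := hrk _ _ (hM.1 _ hx)
    have hry : rk y = rk (matchBottom M y) + 1 := hrk _ _ (hM.1 _ hy)
    exact .inl (Prod.Lex.toLex_lt_toLex.2 (.inl (by omega)))

theorem extensionKey_strictMono (hM : PosetMatching M)
    (hrk : ∀ a b : α, a ⋖ b → rk b = rk a + 1) (hacyc : ¬ PosetHasAltCycle M) :
    StrictMono (extensionKey M rk) := by
  classical
  let _ : LocallyFiniteOrder α := Fintype.toLocallyFiniteOrder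
  exact (strictMono_iff_forall_covBy _).2 fun _ _ => extensionKey_lt_of_covBy hM hrk hacyc

theorem extensionKey_fst_covBy_snd (hM : PosetMatching M)
    (hrk : ∀ a b : α, a ⋖ b → rk b = rk a + 1) {p : α × α} (hp : p ∈ M) :
    extensionKey M rk p.1 ⋖ extensionKey M rk p.2 := by
  rw [extensionKey, extensionKey, matchBottom_fst hM hp, matchBottom_snd hM hp,
    hrk _ _ (hM.1 p hp)]
  exact Prod.Lex.toLex_covBy_toLex_iff.2 (.inl ⟨rfl, Nat.covBy_iff_add_one_eq.2 rfl⟩)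

theorem rk_le_of_extensionKey_le (hM : PosetMatching M) {x y : α}
    (hx : (∃ p ∈ M, p.1 = x) ∨ ∀ p ∈ M, p.1 ≠ x ∧ p.2 ≠ x)
    (hy : (∃ p ∈ M, p.1 = y) ∨ ∀ p ∈ M, p.1 ≠ y ∧ p.2 ≠ y)
    (h : extensionKey M rk x ≤ extensionKey M rk y) : rk x ≤ rk y := by
  have := Prod.Lex.monotone_fst_ofLex (Prod.Lex.monotone_fst_ofLex h)
  rwa [extensionKey, extensionKey, matchBottom_eq_self hM hx, matchBottom_eq_self hM hy] at this

end Extension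

theorem linear_extension_of_acyclic_general {α : Type} [Fintype α]
    [PartialOrder α] (rk : α → ℕ) (hrk : ∀ a b : α, a ⋖ b → rk b = rk a + 1)
    (M : Finset (α × α)) (hM : PosetMatching M) (hacyc : ¬ PosetHasAltCycle M) :
    ∃ ι : α ≃ Fin (Fintype.card α), IsLinearExtension ι ∧
      (∀ p ∈ M, (ι p.2 : ℕ) = (ι p.1 : ℕ) + 1) ∧
      ∀ x y : α,
        ((∃ p ∈ M, p.1 = x) ∨ ∀ p ∈ M, p.1 ≠ x ∧ p.2 ≠ x) →
        ((∃ p ∈ M, p.1 = y) ∨ ∀ p ∈ M, p.1 ≠ y ∧ p.2 ≠ y) →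
        ι x ≤ ι y → rk x ≤ rk y := by
  obtain ⟨ι, hι_le, hι_succ⟩ := exists_equiv_fin_of_injective (extensionKey_injective hM hrk)
  refine ⟨ι, fun x y hxy => (hι_le x y).2 ((extensionKey_strictMono hM hrk hacyc).monotone hxy),
    fun p hp => hι_succ _ _ (extensionKey_fst_covBy_snd hM hrk hp),
    fun x y hx hy hxy => rk_le_of_extensionKey_le hM hx hy ((hι_le x y).1 hxy)⟩

/-- If a partial matching on a finite ranked poset is acyclic, there exists a linear
extension in which each matched element `u(a)` directly follows `a`, and which can
moreover be chosen so that its restriction to the set `D ∪ C` of down-matched and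
critical elements is non-decreasing in rank. -/
theorem linear_extension_of_acyclic {α : Type} [Fintype α] [DecidableEq α]
    [PartialOrder α] (rk : α → ℕ) (hrk : ∀ a b : α, a ⋖ b → rk b = rk a + 1)
    (M : Finset (α × α)) (hM : PosetMatching M) (hacyc : ¬ PosetHasAltCycle M) :
    ∃ ι : α ≃ Fin (Fintype.card α), IsLinearExtension ι ∧
      (∀ p ∈ M, (ι p.2 : ℕ) = (ι p.1 : ℕ) + 1) ∧
      ∀ x y : α,
        ((∃ p ∈ M, p.1 = x) ∨ ∀ p ∈ M, p.1 ≠ x ∧ p.2 ≠ x) →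
        ((∃ p ∈ M, p.1 = y) ∨ ∀ p ∈ M, p.1 ≠ y ∧ p.2 ≠ y) →
        ι x ≤ ι y → rk x ≤ rk y :=
  linear_extension_of_acyclic_general rk hrk M hM hacyc
end

section
/- With the basis change a'_k := ∂b_k, x' := x − w(x ≻ a_k)·b_k, the pair (a'_k, b'_k) spans a subcomplex of C_* isomorphic to Atom(dim b_k), and C_* splits as the direct sum of this subcomplex and the subcomplex generated by the remaining new basis elements. -/
open Finset

universe u

/-- A free chain complex with a chosen basis: basis elements `B` graded by `dim`,
finitely many in each degree, with differential determined by the weights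
`w b a` (the coefficient of `a` in `∂ b`), supported in consecutive degrees
and squaring to zero. -/
structure BasedComplex (R : Type u) [CommRing R] : Type (u + 1) where
  B : Type u
  [deceq : DecidableEq B]
  dim : B → ℤ
  [fin : ∀ n : ℤ, Fintype {b : B // dim b = n}]
  w : B → B → R
  w_dim : ∀ b a, w b a ≠ 0 → dim a = dim b - 1
  dsq : ∀ b z : B, (∑ y : {y : B // dim y = dim b - 1}, w b (y : B) * w (y : B) z) = 0

attribute [instance] BasedComplex.deceq BasedComplex.fin

variable {R : Type u} [CommRing R]

/-- The chain complex is bounded on the right (degrees bounded below). -/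
def BasedComplex.BoundedBelow (C : BasedComplex R) : Prop :=
  ∃ N : ℤ, ∀ b : C.B, N ≤ C.dim b

/-- A partial matching on the basis: a set of pairs `(a, b)` with `b` of one higher
degree, invertible weight `w b a`, and all members of all pairs pairwise distinct. -/
def IsMatching (C : BasedComplex R) (M : Set (C.B × C.B)) : Prop :=
  (∀ p ∈ M, C.dim p.2 = C.dim p.1 + 1 ∧ IsUnit (C.w p.2 p.1)) ∧
  (∀ p ∈ M, ∀ q ∈ M, p ≠ q → p.1 ≠ q.1 ∧ p.1 ≠ q.2 ∧ p.2 ≠ q.1 ∧ p.2 ≠ q.2)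

/-- A basis element is critical if it appears in no matched pair. -/
def IsCritical (C : BasedComplex R) (M : Set (C.B × C.B)) (x : C.B) : Prop :=
  ∀ p ∈ M, p.1 ≠ x ∧ p.2 ≠ x

/-- Existence of an alternating cycle `d(b₁) ≺ b₁ ≻ d(b₂) ≺ ⋯ ≺ bₙ ≻ d(b₁)`,
`n ≥ 2`, with distinct matched pairs `(d(bᵢ), bᵢ) ∈ M`, with respect to a weight
function `w` (nonzero weight plays the role of the covering relation). -/
def HasAltCycleW {B : Type u} (w : B → B → R) (M : Set (B × B)) : Prop :=
  ∃ n : ℕ, ∃ f : Fin (n + 2) → B × B, Function.Injective f ∧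
    (∀ i, f i ∈ M) ∧ ∀ i, w (f i).2 (f (i + 1)).1 ≠ 0

/-- An acyclic matching: a partial matching admitting no alternating cycle. -/
def IsAcyclicMatching (C : BasedComplex R) (M : Set (C.B × C.B)) : Prop :=
  IsMatching C M ∧ ¬ HasAltCycleW C.w M

/-- The weight of an alternating path `s ≻ a₁ ≺ b₁ ≻ a₂ ≺ b₂ ≻ ⋯ ≺ bₙ ≻ t`
(encoded by its list of intermediate matched pairs `(aᵢ, bᵢ)`), namely
`(-1)ⁿ ∏ w(down-edges) / ∏ w(matching edges)`. -/
noncomputable def pathWeightW {B : Type u} (w : B → B → R) : B → List (B × B) → B → R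
  | s, [], t => w s t
  | s, p :: L, t => -(w s p.1) * Ring.inverse (w p.2 p.1) * pathWeightW w p.2 L t

open Classical in
/-- The Morse-differential coefficient from `s` to `t`: the sum of the weights of all
alternating paths from `s` to `t` whose intermediate pairs are distinct members of `M`
(paths through pairs of the wrong degrees have weight `0`). -/
noncomputable def morseCoeffW (C : BasedComplex R) (w' : C.B → C.B → R)
    (M : Set (C.B × C.B)) (s t : C.B) : R :=
  ∑ k ∈ Finset.range
      (Fintype.card ({a : C.B // C.dim a = C.dim s - 1} × {b : C.B // C.dim b = C.dim s}) + 1),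
    ∑ f : Fin k → {a : C.B // C.dim a = C.dim s - 1} × {b : C.B // C.dim b = C.dim s},
      if Function.Injective f ∧ ∀ i, (((f i).1 : C.B), ((f i).2 : C.B)) ∈ M then
        pathWeightW w' s (List.ofFn fun i => (((f i).1 : C.B), ((f i).2 : C.B))) t
      else 0

/-- The Morse-differential coefficient `∑_p w(p)` with the weights of `C` itself. -/
noncomputable def morseCoeff (C : BasedComplex R) (M : Set (C.B × C.B)) (s t : C.B) : R :=
  morseCoeffW C C.w M s t
/-- The boundary operator on chains (finitely supported combinations of basis elements). -/
noncomputable def BasedComplex.bd (C : BasedComplex R) : (C.B →₀ R) →ₗ[R] (C.B →₀ R) :=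
  Finsupp.lsum R fun b => LinearMap.toSpanSingleton R _
    (∑ a : {a : C.B // C.dim a = C.dim b - 1}, Finsupp.single (a : C.B) (C.w b (a : C.B)))

/-- The submodule of chains of degree `n`. -/
def BasedComplex.deg (C : BasedComplex R) (n : ℤ) : Submodule R (C.B →₀ R) :=
  Finsupp.supported R R {b | C.dim b = n}

/-! The dual basis of the new basis can be read off directly: the `a'`-coordinate of a chain `c`
is `c(a)` and its `b'`-coordinate is `(∂c)(a)`, as one checks on the new basis using
`w(b ≻ a) = 1`. Hence the span of the remaining new basis elements is
`{c | c(a) = 0 ∧ (∂c)(a) = 0}`, which `∂` preserves because `∂∂ = 0`. The span of `a', b'` is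
preserved since `∂b' = a'` and `∂a' = ∂∂b = 0`, and the two spans are complementary because
they are spanned by complementary parts of a basis. -/

namespace BasedComplex

variable (C : BasedComplex R)

lemma bd_single_one (x : C.B) :
    C.bd (Finsupp.single x 1) =
      ∑ y : {y : C.B // C.dim y = C.dim x - 1}, C.w x y • Finsupp.single (y : C.B) 1 := by
  simp [bd, Finsupp.smul_single]

lemma bd_single_one_apply (x y : C.B) : C.bd (Finsupp.single x 1) y = C.w x y := by
  simp only [bd_single_one, Finsupp.finsetSum_apply, Finsupp.smul_apply, Finsupp.single_apply,
    smul_eq_mul, mul_ite, mul_one, mul_zero]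
  by_cases h : C.dim y = C.dim x - 1
  · rw [Fintype.sum_eq_single ⟨y, h⟩ fun z hz => if_neg fun hzy => hz (Subtype.ext hzy)]
    exact if_pos rfl
  · rw [Finset.sum_eq_zero fun (z : {z : C.B // C.dim z = C.dim x - 1}) _ =>
      if_neg fun (hzy : (z : C.B) = y) => h (hzy ▸ z.2)]
    by_contra hne
    exact h (C.w_dim x y (Ne.symm hne))

lemma bd_single_apply (x y : C.B) (r : R) : C.bd (Finsupp.single x r) y = r * C.w x y := by
  rw [← C.bd_single_one_apply, ← smul_eq_mul, ← Finsupp.smul_apply, ← map_smul,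
    Finsupp.smul_single_one]

lemma bd_comp_bd : C.bd ∘ₗ C.bd = 0 := by
  refine Finsupp.basisSingleOne.ext fun x => ?_
  ext z
  rw [Finsupp.coe_basisSingleOne, LinearMap.comp_apply, bd_single_one, map_sum,
    Finsupp.finsetSum_apply, LinearMap.zero_apply, Finsupp.coe_zero, Pi.zero_apply,
    ← C.dsq x z]
  simp only [map_smul, Finsupp.smul_apply, bd_single_one_apply, smul_eq_mul]

lemma bd_bd (c : C.B →₀ R) : C.bd (C.bd c) = 0 :=
  LinearMap.congr_fun C.bd_comp_bd c

end BasedComplex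

namespace Module.Basis

variable {ι R M : Type*} [CommRing R] [AddCommGroup M] [Module R M]

lemma repr_apply_eq_of_forall_apply [DecidableEq ι] (v : Basis ι R M) {i : ι} {f : M →ₗ[R] R}
    (hf : ∀ j, f (v j) = if j = i then 1 else 0) (m : M) : v.repr m i = f m :=
  LinearMap.congr_fun (v.ext (f₁ := v.coord i) fun j => by simp [hf, Finsupp.single_apply]) m

lemma mem_span_image_compl_iff (v : Basis ι R M) {s : Set ι} {m : M} :
    m ∈ Submodule.span R (v '' sᶜ) ↔ ∀ i ∈ s, v.repr m i = 0 := by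
  rw [mem_span_image, Set.subset_compl_comm]
  simp [Set.subset_def]

end Module.Basis

namespace BasedComplex

structure IsAtomBasisChange (C : BasedComplex R) (a b : C.B)
    (v : Module.Basis C.B R (C.B →₀ R)) : Prop where
  apply_fst : v a = C.bd (Finsupp.single b 1)
  apply_snd : v b = Finsupp.single b 1
  apply_of_ne : ∀ x, x ≠ a → x ≠ b → v x = Finsupp.single x 1 - C.w x a • Finsupp.single b 1

namespace IsAtomBasisChange

variable {C : BasedComplex R} {a b : C.B} {v : Module.Basis C.B R (C.B →₀ R)}

lemma repr_apply_fst (hv : C.IsAtomBasisChange a b v) (hab : a ≠ b) (hw : C.w b a = 1)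
    (c : C.B →₀ R) : v.repr c a = c a := by
  refine v.repr_apply_eq_of_forall_apply (f := Finsupp.lapply a) (fun j => ?_) c
  rw [Finsupp.lapply_apply]
  by_cases hja : j = a
  · subst hja
    simp [hv.apply_fst, bd_single_apply, hw]
  by_cases hjb : j = b
  · subst hjb
    simp [hv.apply_snd, hja]
  · simp [hv.apply_of_ne j hja hjb, hja, hab]

lemma repr_apply_snd (hv : C.IsAtomBasisChange a b v) (hab : a ≠ b) (hw : C.w b a = 1)
    (c : C.B →₀ R) : v.repr c b = C.bd c a := by
  refine v.repr_apply_eq_of_forall_apply (f := Finsupp.lapply a ∘ₗ C.bd) (fun j => ?_) c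
  rw [LinearMap.comp_apply, Finsupp.lapply_apply]
  by_cases hja : j = a
  · subst hja
    simp [hv.apply_fst, bd_bd, hab]
  by_cases hjb : j = b
  · subst hjb
    simp [hv.apply_snd, bd_single_apply, hw]
  · simp [hv.apply_of_ne j hja hjb, bd_single_apply, hw, hjb]

lemma mem_span_compl_iff (hv : C.IsAtomBasisChange a b v) (hab : a ≠ b) (hw : C.w b a = 1)
    {c : C.B →₀ R} : c ∈ Submodule.span R (v '' {a, b}ᶜ) ↔ c a = 0 ∧ C.bd c a = 0 := by
  simp [v.mem_span_image_compl_iff, hv.repr_apply_fst hab hw, hv.repr_apply_snd hab hw]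

lemma map_bd_span_compl_le (hv : C.IsAtomBasisChange a b v) (hab : a ≠ b) (hw : C.w b a = 1) :
    Submodule.map C.bd (Submodule.span R (v '' {a, b}ᶜ)) ≤ Submodule.span R (v '' {a, b}ᶜ) := by
  rintro _ ⟨c, hc, rfl⟩
  rw [SetLike.mem_coe, hv.mem_span_compl_iff hab hw] at hc
  rw [hv.mem_span_compl_iff hab hw]
  exact ⟨hc.2, by rw [bd_bd, Finsupp.coe_zero, Pi.zero_apply]⟩

end IsAtomBasisChange

end BasedComplex

/-- With the basis change `a' = ∂b`, `b' = b`, `x' = x − w(x ≻ a) • b`, the pair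
`(a', b')` spans a subcomplex of `C_*` isomorphic to `Atom(dim b)` (that is,
`∂b' = a'` and `∂a' = 0`), and `C_*` splits as the direct sum of this subcomplex and
the subcomplex spanned by the remaining new basis elements. -/
theorem basis_change_atom_split (C : BasedComplex R) (a b : C.B)
    (hdim : C.dim b = C.dim a + 1) (hw : C.w b a = 1)
    (v : Module.Basis C.B R (C.B →₀ R))
    (hva : v a = C.bd (Finsupp.single b 1))
    (hvb : v b = Finsupp.single b 1)
    (hvx : ∀ x : C.B, x ≠ a → x ≠ b →
      v x = Finsupp.single x 1 - C.w x a • Finsupp.single b 1) :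
    C.bd (v b) = v a ∧
    C.bd (v a) = 0 ∧
    Submodule.map C.bd (Submodule.span R {v a, v b}) ≤ Submodule.span R {v a, v b} ∧
    Submodule.map C.bd
        (Submodule.span R (Set.range fun x : {x : C.B // x ≠ a ∧ x ≠ b} => v (x : C.B))) ≤
      Submodule.span R (Set.range fun x : {x : C.B // x ≠ a ∧ x ≠ b} => v (x : C.B)) ∧
    IsCompl (Submodule.span R {v a, v b})
      (Submodule.span R (Set.range fun x : {x : C.B // x ≠ a ∧ x ≠ b} => v (x : C.B))) := by
  have hv : C.IsAtomBasisChange a b v := ⟨hva, hvb, hvx⟩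
  have hab : a ≠ b := fun h => by rw [h] at hdim; omega
  have hbd_b : C.bd (v b) = v a := by rw [hvb, hva]
  have hbd_a : C.bd (v a) = 0 := by rw [hva, C.bd_bd]
  have hrest : (Set.range fun x : {x : C.B // x ≠ a ∧ x ≠ b} => v (x : C.B)) = v '' {a, b}ᶜ := by
    ext; simp [not_or]
  refine ⟨hbd_b, hbd_a, ?_, hrest ▸ hv.map_bd_span_compl_le hab hw, ?_⟩
  · rw [Submodule.map_span_le]
    rintro _ (rfl | rfl)
    · rw [hbd_a]
      exact Submodule.zero_mem _
    · rw [hbd_b]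
      exact Submodule.subset_span (Set.mem_insert _ _)
  · rw [hrest, ← Set.image_pair]
    exact v.linearIndependent.isCompl_span_image v.span_eq isCompl_compl
end
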